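/- arXiv:2010.00976 — 2 statements merged into one kernel-verified Lean document; each statement's English description precedes it below -/
import Mathlib

section
/- Let a ∈ C¹([0,1]) with a > 0, and f ∈ C¹([0,∞)) satisfy (f_eq) and (f_sgn). For each n ∈ ℕ let u_n be a classical solution of (P_n), and assume sup_n ‖u_n‖_{L∞(0,1)} < ∞. Define the energies E_n(x) := u_n'(x) φ_n(u_n'(x)) − Φ_n(u_n'(x)) + a(x) F(u_n(x)). Then the sequence (E_n) is uniformly bounded, satisfies |E_n'(x)| ≤ C E_n(x) on (0,1) with C := max_{[0,1]}|a'| / min_{[0,1]} a, and admits a subsequence converging uniformly on [0,1]; the limit function E is continuous on [0,1]. -/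
open Set MeasureTheory Filter Topology

noncomputable section

/-- `φ(s) = s / √(1+s²)`. -/
def phi (s : ℝ) : ℝ := s / Real.sqrt (1 + s ^ 2)

/-- `φ'(s) = (1+s²)^(-3/2)`. -/
def phiD (s : ℝ) : ℝ := 1 / (Real.sqrt (1 + s ^ 2)) ^ 3

/-- the inverse of `φ`, a bijection of `(-1,1)` onto `ℝ`. -/
def phiInv (y : ℝ) : ℝ := y / Real.sqrt (1 - y ^ 2)

/-- the approximation `φₙ`: equal to `φ` on `[-n,n]`, affine outside. -/
def phiN (n : ℕ) (s : ℝ) : ℝ :=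
  if (n : ℝ) < s then phi n + phiD n * (s - n)
  else if s < -(n : ℝ) then -phi n + phiD n * (s + n)
  else phi s

/-- `Φ(s) = √(1+s²) - 1`. -/
def PhiBig (s : ℝ) : ℝ := Real.sqrt (1 + s ^ 2) - 1

/-- `Φₙ(s) = ∫₀ˢ φₙ`. -/
def PhiNBig (n : ℕ) (s : ℝ) : ℝ := ∫ t in (0:ℝ)..s, phiN n t

/-- the extension `f̂` of `f` vanishing on the negatives. -/
def fhat (f : ℝ → ℝ) (s : ℝ) : ℝ := if s < 0 then 0 else f s

/-- `F(s) = ∫_{u0}^s f`. -/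
def Fprim (f : ℝ → ℝ) (u0 s : ℝ) : ℝ := ∫ t in u0..s, f t

/-- assumption `(f_eq)`. -/
def Feq (f : ℝ → ℝ) (u0 : ℝ) : Prop := f 0 = 0 ∧ f u0 = 0

/-- assumption `(f_sgn)`. -/
def Fsgn (f : ℝ → ℝ) (u0 : ℝ) : Prop :=
  (∀ s, 0 < s → s < u0 → f s < 0) ∧ (∀ s, u0 < s → 0 < f s)

/-- the constant `C_a`. -/
def Ca (a : ℝ → ℝ) : ℝ :=
  max ((a 1 / a 0) * Real.exp (∫ x in (0:ℝ)..1, max (-deriv a x) 0 / a x))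
      ((a 0 / a 1) * Real.exp (∫ x in (0:ℝ)..1, max (deriv a x) 0 / a x))

/-- assumption `(f_ap)`, with the value `ū` made explicit. -/
def Fap (a f : ℝ → ℝ) (u0 ubar : ℝ) : Prop :=
  u0 < ubar ∧ (∫ s in u0..ubar, f s) = Ca a * ∫ s in u0..(0:ℝ), f s

/-- assumption `(f_ap)'`. -/
def Fap' (a f : ℝ → ℝ) : Prop :=
  (∫ x in (0:ℝ)..1, a x) * sSup ((fun s => max (-f s) 0) '' Ici 0) < 1

/-- classical solution of the approximated Neumann problem `(Pₙ)`. -/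
def IsPnSol (a f : ℝ → ℝ) (n : ℕ) (u : ℝ → ℝ) : Prop :=
  ContDiff ℝ 2 u ∧ (∀ x ∈ Ioo (0:ℝ) 1, 0 < u x) ∧
  deriv u 0 = 0 ∧ deriv u 1 = 0 ∧
  ∀ x ∈ Ioo (0:ℝ) 1, -deriv (fun y => phiN n (deriv u y)) x = a x * f (u x)

/-- classical solution of the prescribed mean curvature Neumann problem `(P)`. -/
def IsPSol (a f : ℝ → ℝ) (u : ℝ → ℝ) : Prop :=
  ContDiff ℝ 2 u ∧ (∀ x ∈ Ioo (0:ℝ) 1, 0 < u x) ∧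
  deriv u 0 = 0 ∧ deriv u 1 = 0 ∧
  ∀ x ∈ Ioo (0:ℝ) 1, -deriv (fun y => phi (deriv u y)) x = a x * f (u x)

/-- solution of the Cauchy problem with initial datum `d`. -/
def IsCauchySol (a f : ℝ → ℝ) (n : ℕ) (d : ℝ) (u : ℝ → ℝ) : Prop :=
  ContDiff ℝ 2 u ∧ u 0 = d ∧ deriv u 0 = 0 ∧
  ∀ x ∈ Ioo (0:ℝ) 1, -deriv (fun y => phiN n (deriv u y)) x = a x * fhat f (u x)

/-- `θ` is a (clockwise) angular variable for `(u - u0, φₙ(u'))` around `(u0,0)`. -/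
def IsAngle (n : ℕ) (u0 : ℝ) (u θ : ℝ → ℝ) : Prop :=
  ContinuousOn θ (Icc 0 1) ∧
  ∀ x ∈ Icc (0:ℝ) 1,
    u x - u0 = Real.sqrt ((u x - u0) ^ 2 + phiN n (deriv u x) ^ 2) * Real.cos (θ x) ∧
    phiN n (deriv u x) = -(Real.sqrt ((u x - u0) ^ 2 + phiN n (deriv u x) ^ 2) * Real.sin (θ x))

/-- non-constant on `(0,1)`. -/
def Nonconstant (u : ℝ → ℝ) : Prop := ∃ x ∈ Ioo (0:ℝ) 1, ∃ y ∈ Ioo (0:ℝ) 1, u x ≠ u y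

/-- the set of points of `(0,1)` where `u` takes the value `u0`. -/
def zeroSet (u : ℝ → ℝ) (u0 : ℝ) : Set ℝ := {x | x ∈ Ioo (0:ℝ) 1 ∧ u x = u0}

/-- the hypothesis `f'(u0) > λ_{k+1}`: there is `λ̄ < f'(u0)` admitting a nontrivial Neumann
eigenfunction of `-w'' = λ̄ a w` with exactly `k` zeros in `(0,1)`. -/
def EigenHyp (a f : ℝ → ℝ) (u0 : ℝ) (k : ℕ) : Prop :=
  ∃ lam : ℝ, ∃ w : ℝ → ℝ, lam < deriv f u0 ∧ ContDiff ℝ 2 w ∧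
    (∃ x ∈ Icc (0:ℝ) 1, w x ≠ 0) ∧
    (∀ x ∈ Ioo (0:ℝ) 1, -deriv (deriv w) x = lam * a x * w x) ∧
    deriv w 0 = 0 ∧ deriv w 1 = 0 ∧ (zeroSet w 0).ncard = k

/-- the functional `J(v) = ∫₀¹ √(1+|Dv|²)`. -/
def Jfun (v : ℝ → ℝ) : ℝ :=
  sSup { r : ℝ | ∃ w₁ w₂ : ℝ → ℝ, ContDiff ℝ 1 w₁ ∧ ContDiff ℝ 1 w₂ ∧
    tsupport w₁ ⊆ Ioo 0 1 ∧ tsupport w₂ ⊆ Ioo 0 1 ∧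
    (∀ x, w₁ x ^ 2 + w₂ x ^ 2 ≤ 1) ∧
    r = ∫ x in Ioo (0:ℝ) 1, (v x * deriv w₁ x + w₂ x) }

/-- BV-solution of the Neumann problem `(P)`. -/
def IsBVSol (a f : ℝ → ℝ) (u : ℝ → ℝ) : Prop :=
  BoundedVariationOn u (Ioo 0 1) ∧ (∀ x ∈ Ioo (0:ℝ) 1, 0 ≤ u x) ∧
  ∀ v : ℝ → ℝ, BoundedVariationOn v (Ioo 0 1) →
    Jfun u + ∫ x in Ioo (0:ℝ) 1, a x * f (u x) * (v x - u x) ≤ Jfun v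

/-- `u - u0` changes sign at `z`. -/
def ChangesSign (u : ℝ → ℝ) (u0 z : ℝ) : Prop :=
  ∃ δ > (0:ℝ), ((∀ x ∈ Ioo (z - δ) z, u x < u0) ∧ (∀ x ∈ Ioo z (z + δ), u0 < u x)) ∨
           ((∀ x ∈ Ioo (z - δ) z, u0 < u x) ∧ (∀ x ∈ Ioo z (z + δ), u x < u0))

/-- the energy `Eₙ` along a solution of `(Pₙ)`. -/
def EnergyN (a f : ℝ → ℝ) (u0 : ℝ) (n : ℕ) (u : ℝ → ℝ) (x : ℝ) : ℝ :=
  deriv u x * phiN n (deriv u x) - PhiNBig n (deriv u x) + a x * Fprim f u0 (u x)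

/-- the energy `ℰ` of `u` extends to a continuous function on `[0,1]`. -/
def HasContinuousEnergy (a f : ℝ → ℝ) (u0 : ℝ) (u : ℝ → ℝ) : Prop :=
  ∃ E : ℝ → ℝ, ContinuousOn E (Icc 0 1) ∧
    ∀ x ∈ Ioo (0:ℝ) 1, ContinuousAt u x →
      (DifferentiableAt ℝ u x →
        E x = 1 - 1 / Real.sqrt (1 + deriv u x ^ 2) + a x * Fprim f u0 (u x)) ∧
      (¬ DifferentiableAt ℝ u x → E x = 1 + a x * Fprim f u0 (u x))

/-- the oscillatory structure of the BV-solutions of Theorem 1.1: `m` generalized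
intersections with `u0`, with starting sign `σ` (`σ = 1` for case (I), `σ = -1` for case (II)). -/
def OscStructure (u0 : ℝ) (u : ℝ → ℝ) (m : ℕ) (σ : ℝ) : Prop :=
  ∃ x : ℕ → ℝ,
    x 0 = 0 ∧ x (m + 1) = 1 ∧ (∀ i ≤ m, x i < x (i + 1)) ∧
    ContDiffOn ℝ 2 u (Ico 0 (x 1)) ∧ ContDiffOn ℝ 2 u (Ioc (x m) 1) ∧
    (∀ i, 1 ≤ i → i + 1 ≤ m → ContDiffOn ℝ 2 u (Ioo (x i) (x (i + 1)))) ∧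
    derivWithin u (Icc 0 1) 0 = 0 ∧ derivWithin u (Icc 0 1) 1 = 0 ∧
    (∀ i ≤ m, ∀ y ∈ Ioo (x i) (x (i + 1)), 0 < σ * (-1 : ℝ) ^ (i + 1) * (u y - u0)) ∧
    ∀ i, 1 ≤ i → i ≤ m →
      (u (x i) = u0 ∧ ContDiffOn ℝ 2 u (Ioo (x (i - 1)) (x (i + 1)))) ∨
      (∃ L R : ℝ, Tendsto u (𝓝[<] x i) (𝓝 L) ∧ Tendsto u (𝓝[>] x i) (𝓝 R) ∧
        (0 < σ * (-1 : ℝ) ^ (i + 1) →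
          L ≤ u0 ∧ u0 ≤ R ∧ Tendsto (deriv u) (𝓝[<] x i) atTop ∧
            Tendsto (deriv u) (𝓝[>] x i) atTop) ∧
        (σ * (-1 : ℝ) ^ (i + 1) < 0 →
          R ≤ u0 ∧ u0 ≤ L ∧ Tendsto (deriv u) (𝓝[<] x i) atBot ∧
            Tendsto (deriv u) (𝓝[>] x i) atBot))
section auxlemmas
variable {f : ℝ → ℝ} {u0 : ℝ}


lemma sq1pos (s : ℝ) : (0:ℝ) < 1 + s ^ 2 := by positivity

lemma sqrt_pos' (s : ℝ) : 0 < Real.sqrt (1 + s ^ 2) := Real.sqrt_pos.mpr (sq1pos s)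

lemma phiD_pos (s : ℝ) : 0 < phiD s := by
  unfold phiD; positivity

lemma phiD_neg (s : ℝ) : phiD (-s) = phiD s := by simp [phiD]

lemma phi_neg (s : ℝ) : phi (-s) = - phi s := by simp [phi, neg_div]

lemma hasDerivAt_phi (s : ℝ) : HasDerivAt phi (phiD s) s := by
  have hs := sqrt_pos' s
  have hsq : Real.sqrt (1 + s ^ 2) ^ 2 = 1 + s ^ 2 :=
    Real.sq_sqrt (sq1pos s).le
  have hd : HasDerivAt (fun t : ℝ => Real.sqrt (1 + t ^ 2)) (s / Real.sqrt (1 + s ^ 2)) s := by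
    have h1 : HasDerivAt (fun t : ℝ => 1 + t ^ 2) (2 * s) s := by
      simpa using ((hasDerivAt_pow 2 s).const_add 1)
    have h2 := (Real.hasDerivAt_sqrt (ne_of_gt (sq1pos s))).comp s h1
    refine HasDerivAt.congr_deriv h2 (Eq.symm ?_)
    field_simp
  have h := (hasDerivAt_id s).div hd (ne_of_gt hs)
  refine HasDerivAt.congr_deriv h (Eq.symm ?_)
  unfold phiD
  simp only [id, one_mul]
  rw [div_eq_div_iff (by positivity) (by positivity), hsq]
  have h3 : Real.sqrt (1 + s ^ 2) ^ 3 = (1 + s^2) * Real.sqrt (1 + s ^ 2) := by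
    rw [pow_succ, hsq]
  rw [h3]
  field_simp
  linarith [hsq]

lemma phiN_eq_phi {n : ℕ} {s : ℝ} (h1 : -(n:ℝ) ≤ s) (h2 : s ≤ n) : phiN n s = phi s := by
  unfold phiN
  rw [if_neg (not_lt.mpr h2), if_neg (not_lt.mpr h1)]

lemma phiN_zero (n : ℕ) : phiN n 0 = 0 := by
  rw [phiN_eq_phi (by simp) (by simp)]
  simp [phi]

lemma hasDerivAt_phiN (n : ℕ) (s : ℝ) : ∃ d, 0 < d ∧ HasDerivAt (phiN n) d s := by
  by_cases hn : n = 0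
  · subst hn
    have hid : phiN 0 = fun t => t := by
      funext t
      unfold phiN
      simp only [Nat.cast_zero, neg_zero]
      split_ifs with h1 h2
      · simp [phi, phiD]
      · simp [phi, phiD]
      · have : t = 0 := le_antisymm (not_lt.mp h1) (not_lt.mp h2)
        simp [this, phi]
    rw [hid]
    exact ⟨1, one_pos, hasDerivAt_id s⟩
  have hn' : (0:ℝ) < n := by exact_mod_cast Nat.pos_of_ne_zero hn
  have hnn : -(n:ℝ) < n := by linarith
  have hR : ∀ t : ℝ, HasDerivAt (fun t : ℝ => phi n + phiD n * (t - (n:ℝ))) (phiD n) t := by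
    intro t
    simpa using (((hasDerivAt_id t).sub_const ((n:ℝ))).const_mul (phiD (n:ℝ))).const_add (phi (n:ℝ))
  have hL : ∀ t : ℝ, HasDerivAt (fun t : ℝ => -phi n + phiD n * (t + (n:ℝ))) (phiD n) t := by
    intro t
    simpa using (((hasDerivAt_id t).add_const ((n:ℝ))).const_mul (phiD (n:ℝ))).const_add (-phi (n:ℝ))
  have hRe : ∀ t ∈ Ici (n:ℝ), phiN n t = phi n + phiD n * (t - n) := by
    intro t ht
    rcases eq_or_lt_of_le (mem_Ici.mp ht) with h | h
    · rw [phiN_eq_phi (by linarith) h.symm.le, ← h]; ring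
    · unfold phiN; rw [if_pos h]
  have hLe : ∀ t ∈ Iic (-(n:ℝ)), phiN n t = -phi n + phiD n * (t + n) := by
    intro t ht
    rcases eq_or_lt_of_le (mem_Iic.mp ht) with h | h
    · rw [h, phiN_eq_phi le_rfl (by linarith), phi_neg]; ring
    · unfold phiN; rw [if_neg (by push_neg; linarith), if_pos h]
  have hIccIic : Icc (-(n:ℝ)) n ∈ 𝓝[Iic (n:ℝ)] (n:ℝ) := by
    apply mem_nhdsWithin.mpr
    exact ⟨Ioi (-(n:ℝ)), isOpen_Ioi, hnn, fun t ⟨ht1, ht2⟩ => ⟨le_of_lt ht1, ht2⟩⟩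
  have hIccIci : Icc (-(n:ℝ)) n ∈ 𝓝[Ici (-(n:ℝ))] (-(n:ℝ)) := by
    apply mem_nhdsWithin.mpr
    exact ⟨Iio (n:ℝ), isOpen_Iio, hnn, fun t ⟨ht1, ht2⟩ => ⟨ht2, le_of_lt ht1⟩⟩
  have hphiIcc : ∀ t ∈ Icc (-(n:ℝ)) n, HasDerivWithinAt (phiN n) (phiD t) (Icc (-(n:ℝ)) n) t := by
    intro t ht
    exact ((hasDerivAt_phi t).hasDerivWithinAt).congr (fun y hy => phiN_eq_phi hy.1 hy.2)
      (phiN_eq_phi ht.1 ht.2)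
  rcases lt_trichotomy s (-(n:ℝ)) with hs | hs | hs
  · refine ⟨phiD n, phiD_pos _, ?_⟩
    refine (hL s).congr_of_eventuallyEq ?_
    filter_upwards [isOpen_Iio.mem_nhds hs] with t ht
    exact hLe t (mem_Iic.mpr (le_of_lt ht))
  · subst hs
    refine ⟨phiD n, phiD_pos _, ?_⟩
    have left : HasDerivWithinAt (phiN n) (phiD n) (Iic (-(n:ℝ))) (-(n:ℝ)) :=
      ((hL _).hasDerivWithinAt).congr hLe (hLe _ (mem_Iic.mpr le_rfl))
    have right : HasDerivWithinAt (phiN n) (phiD n) (Ici (-(n:ℝ))) (-(n:ℝ)) := by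
      have := (hphiIcc (-(n:ℝ)) ⟨le_rfl, by linarith⟩).mono_of_mem_nhdsWithin hIccIci
      rwa [phiD_neg] at this
    have := left.union right
    rw [Iic_union_Ici] at this
    exact this.hasDerivAt (by simp)
  rcases lt_trichotomy s ((n:ℝ)) with hs2 | hs2 | hs2
  · refine ⟨phiD s, phiD_pos _, ?_⟩
    refine (hasDerivAt_phi s).congr_of_eventuallyEq ?_
    filter_upwards [isOpen_Ioo.mem_nhds (⟨hs, hs2⟩ : s ∈ Ioo (-(n:ℝ)) (n:ℝ))] with t ht
    exact phiN_eq_phi ht.1.le ht.2.le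
  · subst hs2
    refine ⟨phiD n, phiD_pos _, ?_⟩
    have left : HasDerivWithinAt (phiN n) (phiD (n:ℝ)) (Iic ((n:ℝ))) ((n:ℝ)) :=
      (hphiIcc (n:ℝ) ⟨by linarith, le_rfl⟩).mono_of_mem_nhdsWithin hIccIic
    have right : HasDerivWithinAt (phiN n) (phiD n) (Ici ((n:ℝ))) ((n:ℝ)) :=
      ((hR _).hasDerivWithinAt).congr hRe (hRe _ (mem_Ici.mpr le_rfl))
    have := left.union right
    rw [Iic_union_Ici] at this
    exact this.hasDerivAt (by simp)
  · refine ⟨phiD n, phiD_pos _, ?_⟩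
    refine (hR s).congr_of_eventuallyEq ?_
    filter_upwards [isOpen_Ioi.mem_nhds hs2] with t ht
    exact hRe t (mem_Ici.mpr (le_of_lt ht))

lemma phiN_diff (n : ℕ) : Differentiable ℝ (phiN n) := fun s =>
  ((hasDerivAt_phiN n s).choose_spec.2).differentiableAt

lemma phiN_cont (n : ℕ) : Continuous (phiN n) := (phiN_diff n).continuous

lemma phiN_mono (n : ℕ) : StrictMono (phiN n) := by
  apply strictMono_of_deriv_pos
  intro s
  obtain ⟨d, hd, h⟩ := hasDerivAt_phiN n s
  rw [h.deriv]; exact hd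

lemma hasDerivAt_PhiNBig (n : ℕ) (s : ℝ) : HasDerivAt (PhiNBig n) (phiN n s) s :=
  intervalIntegral.integral_hasDerivAt_right ((phiN_cont n).intervalIntegrable _ _)
    ((phiN_cont n).stronglyMeasurableAtFilter _ _) (phiN_cont n).continuousAt

lemma PhiNBig_cont (n : ℕ) : Continuous (PhiNBig n) :=
  Differentiable.continuous (fun s => (hasDerivAt_PhiNBig n s).differentiableAt)

lemma PhiNBig_zero (n : ℕ) : PhiNBig n 0 = 0 := intervalIntegral.integral_same

lemma G_nonneg (n : ℕ) (s : ℝ) : PhiNBig n s ≤ s * phiN n s := by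
  rcases le_or_gt 0 s with h | h
  · have : PhiNBig n s ≤ ∫ _ in (0:ℝ)..s, phiN n s := by
      apply intervalIntegral.integral_mono_on h ((phiN_cont n).intervalIntegrable _ _)
        (intervalIntegrable_const)
      intro t ht
      exact (phiN_mono n).monotone ht.2
    simpa using this
  · have h0 : (∫ _ in s..(0:ℝ), phiN n s) ≤ ∫ t in s..(0:ℝ), phiN n t := by
      apply intervalIntegral.integral_mono_on h.le intervalIntegrable_const
        ((phiN_cont n).intervalIntegrable _ _)
      intro t ht
      exact (phiN_mono n).monotone ht.1
    have : PhiNBig n s = -∫ t in s..(0:ℝ), phiN n t := by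
      rw [← intervalIntegral.integral_symm]; rfl
    rw [this]
    have h2 : (∫ _ in s..(0:ℝ), phiN n s) = -s * phiN n s := by simp
    nlinarith [h0]


variable {f : ℝ → ℝ} {u0 : ℝ}

lemma F_integrable (hf : ContDiffOn ℝ 1 f (Ici 0)) (hu0 : 0 < u0) {c s : ℝ}
    (hc : 0 ≤ c) (hs : 0 ≤ s) : IntervalIntegrable f volume c s := by
  apply ContinuousOn.intervalIntegrable
  apply hf.continuousOn.mono
  intro t ht
  rcases ht with ⟨h1, _⟩
  have := le_min hc hs
  exact le_trans this (by simpa using h1)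

lemma F_nonneg (hf : ContDiffOn ℝ 1 f (Ici 0)) (hu0 : 0 < u0) (hfeq : Feq f u0)
    (hfsgn : Fsgn f u0) {s : ℝ} (hs : 0 ≤ s) : 0 ≤ Fprim f u0 s := by
  rcases le_or_gt u0 s with h | h
  · apply intervalIntegral.integral_nonneg h
    intro t ht
    rcases eq_or_lt_of_le ht.1 with h1 | h1
    · rw [← h1, hfeq.2]
    · exact (hfsgn.2 t h1).le
  · have heq : Fprim f u0 s = ∫ t in s..u0, -f t := by
      rw [intervalIntegral.integral_neg, ← intervalIntegral.integral_symm]; rfl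
    rw [heq]
    apply intervalIntegral.integral_nonneg h.le
    intro t ht
    rw [neg_nonneg]
    rcases eq_or_lt_of_le (le_trans hs ht.1) with h1 | h1
    · rw [← h1, hfeq.1]
    · rcases eq_or_lt_of_le ht.2 with h2 | h2
      · rw [h2, hfeq.2]
      · exact (hfsgn.1 t h1 h2).le

lemma F_hasDerivAt (hf : ContDiffOn ℝ 1 f (Ici 0)) (hu0 : 0 < u0) {s : ℝ} (hs : 0 < s) :
    HasDerivAt (Fprim f u0) (f s) s := by
  have hc : ContinuousAt f s :=
    (hf.continuousOn.continuousAt (Ici_mem_nhds hs))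
  exact intervalIntegral.integral_hasDerivAt_right (F_integrable hf hu0 hu0.le hs.le)
    (ContinuousOn.stronglyMeasurableAtFilter isOpen_Ioi
      (hf.continuousOn.mono Ioi_subset_Ici_self) s hs) hc

lemma F_continuousOn (hf : ContDiffOn ℝ 1 f (Ici 0)) (hu0 : 0 < u0) {R : ℝ} (hR : u0 ≤ R) :
    ContinuousOn (Fprim f u0) (Icc 0 R) := by
  have h0R : (0:ℝ) ≤ R := le_trans hu0.le hR
  have := intervalIntegral.continuousOn_primitive_interval'
    (μ := volume) (b₁ := (0:ℝ)) (b₂ := R) (a := u0)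
    (F_integrable hf hu0 le_rfl h0R)
    (by rw [uIcc_of_le h0R]; exact ⟨hu0.le, hR⟩)
  rwa [uIcc_of_le h0R] at this

lemma F_u0 : Fprim f u0 u0 = 0 := intervalIntegral.integral_same

lemma lipschitzOnWith_Icc_of_Ioo {L : NNReal} {g : ℝ → ℝ}
    (hc : ContinuousOn g (Icc 0 1)) (hl : LipschitzOnWith L g (Ioo 0 1)) :
    LipschitzOnWith L g (Icc 0 1) := by
  rw [lipschitzOnWith_iff_dist_le_mul] at hl ⊢
  intro x hx y hy
  set φ : ℝ → ℝ → ℝ := fun t z => min (max z t) (1 - t) with hφ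
  have hmem : ∀ t ∈ Ioo (0:ℝ) (1/2), ∀ z, φ t z ∈ Ioo (0:ℝ) 1 := by
    intro t ht z
    constructor
    · exact lt_min (lt_of_lt_of_le ht.1 (le_max_right _ _)) (by linarith [ht.2])
    · exact lt_of_le_of_lt (min_le_right _ _) (by linarith [ht.1])
  have htends : ∀ z ∈ Icc (0:ℝ) 1, Tendsto (fun t => φ t z) (𝓝[>] 0) (𝓝 z) := by
    intro z hz
    have hcont : ContinuousAt (fun t => φ t z) 0 :=
      ((continuous_const.max continuous_id).min
        (continuous_const.sub continuous_id)).continuousAt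
    have h0 : φ 0 z = z := by
      simp only [hφ, sub_zero]
      rw [max_eq_left hz.1, min_eq_left hz.2]
    have : Tendsto (fun t => φ t z) (𝓝[>] (0:ℝ)) (𝓝 (φ 0 z)) :=
      hcont.tendsto.mono_left nhdsWithin_le_nhds
    rwa [h0] at this
  have hgt : ∀ z ∈ Icc (0:ℝ) 1, Tendsto (fun t => g (φ t z)) (𝓝[>] 0) (𝓝 (g z)) := by
    intro z hz
    apply (hc z hz).tendsto.comp
    apply tendsto_nhdsWithin_of_tendsto_nhds_of_eventually_within _ (htends z hz)
    filter_upwards [Ioo_mem_nhdsGT_of_mem (left_mem_Ico.mpr (by norm_num : (0:ℝ) < 1/2))]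
      with t ht
    exact Ioo_subset_Icc_self (hmem t ht z)
  have hev : ∀ᶠ t in 𝓝[>] (0:ℝ),
      dist (g (φ t x)) (g (φ t y)) ≤ L * dist (φ t x) (φ t y) := by
    filter_upwards [Ioo_mem_nhdsGT_of_mem (left_mem_Ico.mpr (by norm_num : (0:ℝ) < 1/2))]
      with t ht
    exact hl _ (hmem t ht x) _ (hmem t ht y)
  have h1 : Tendsto (fun t => dist (g (φ t x)) (g (φ t y))) (𝓝[>] (0:ℝ))
      (𝓝 (dist (g x) (g y))) := (hgt x hx).dist (hgt y hy)
  have h2 : Tendsto (fun t => (L:ℝ) * dist (φ t x) (φ t y)) (𝓝[>] (0:ℝ))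
      (𝓝 ((L:ℝ) * dist x y)) := tendsto_const_nhds.mul ((htends x hx).dist (htends y hy))
  exact le_of_tendsto_of_tendsto h1 h2 hev


section main

variable {a : ℝ → ℝ} {n : ℕ} {u : ℝ → ℝ}

lemma u_nonneg (hu2 : ContDiff ℝ 2 u) (hupos : ∀ x ∈ Ioo (0:ℝ) 1, 0 < u x) :
    ∀ x ∈ Icc (0:ℝ) 1, 0 ≤ u x := by
  intro x hx
  have hx' : x ∈ closure (Ioo (0:ℝ) 1) := by
    rw [closure_Ioo (by norm_num : (0:ℝ) ≠ 1)]; exact hx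
  have hne : (𝓝[Ioo (0:ℝ) 1] x).NeBot := mem_closure_iff_nhdsWithin_neBot.mp hx'
  have htd : Tendsto u (𝓝[Ioo (0:ℝ) 1] x) (𝓝 (u x)) :=
    (hu2.continuous.continuousAt).tendsto.mono_left nhdsWithin_le_nhds
  exact ge_of_tendsto htd (eventually_mem_nhdsWithin.mono fun t ht => (hupos t ht).le)

lemma deriv_u_contDiff (hu2 : ContDiff ℝ 2 u) : ContDiff ℝ 1 (deriv u) := by
  have h2 : ContDiff ℝ (1 + 1) u := by norm_num at hu2 ⊢; exact hu2
  exact (contDiff_succ_iff_deriv.mp h2).2.2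

lemma energy_hasDerivAt (ha : ContDiff ℝ 1 a) (hf : ContDiffOn ℝ 1 f (Ici 0)) (hu0 : 0 < u0)
    (hu2 : ContDiff ℝ 2 u) (hupos : ∀ x ∈ Ioo (0:ℝ) 1, 0 < u x)
    (hode : ∀ x ∈ Ioo (0:ℝ) 1, -deriv (fun y => phiN n (deriv u y)) x = a x * f (u x))
    {x : ℝ} (hx : x ∈ Ioo (0:ℝ) 1) :
    HasDerivAt (EnergyN a f u0 n u) (deriv a x * Fprim f u0 (u x)) x := by
  have hud := deriv_u_contDiff hu2
  have h1 : HasDerivAt (deriv u) (deriv (deriv u) x) x :=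
    ((hud.differentiable one_ne_zero) x).hasDerivAt
  obtain ⟨d, hdpos, hd⟩ := hasDerivAt_phiN n (deriv u x)
  have hv : HasDerivAt (fun y => phiN n (deriv u y)) (d * deriv (deriv u) x) x :=
    hd.comp x h1
  have hveq : d * deriv (deriv u) x = -(a x * f (u x)) := by
    rw [← hv.deriv]
    have := hode x hx
    linarith
  rw [hveq] at hv
  have h3 : HasDerivAt (fun y => PhiNBig n (deriv u y))
      (phiN n (deriv u x) * deriv (deriv u) x) x :=
    (hasDerivAt_PhiNBig n (deriv u x)).comp x h1
  have hu1 : HasDerivAt u (deriv u x) x := ((hu2.differentiable (by norm_num)) x).hasDerivAt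
  have h4 : HasDerivAt (fun y => Fprim f u0 (u y)) (f (u x) * deriv u x) x :=
    (F_hasDerivAt hf hu0 (hupos x hx)).comp x hu1
  have h5 : HasDerivAt a (deriv a x) x := ((ha.differentiable one_ne_zero) x).hasDerivAt
  have hE := ((h1.mul hv).sub h3).add (h5.mul h4)
  have : HasDerivAt (EnergyN a f u0 n u)
      (deriv (deriv u) x * phiN n (deriv u x) + deriv u x * -(a x * f (u x)) -
        phiN n (deriv u x) * deriv (deriv u) x +
        (deriv a x * Fprim f u0 (u x) + a x * (f (u x) * deriv u x))) x := hE
  convert this using 1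
  ring

lemma energy_contOn (ha : ContDiff ℝ 1 a) (hf : ContDiffOn ℝ 1 f (Ici 0)) (hu0 : 0 < u0)
    (hu2 : ContDiff ℝ 2 u) (hupos : ∀ x ∈ Ioo (0:ℝ) 1, 0 < u x)
    {R : ℝ} (hR : u0 ≤ R) (hM : ∀ x ∈ Icc (0:ℝ) 1, u x ≤ R) :
    ContinuousOn (EnergyN a f u0 n u) (Icc 0 1) := by
  have hud := (deriv_u_contDiff hu2).continuous
  have h1 : ContinuousOn (fun x => Fprim f u0 (u x)) (Icc 0 1) := by
    apply (F_continuousOn hf hu0 hR).comp hu2.continuous.continuousOn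
    intro x hx
    exact ⟨u_nonneg hu2 hupos x hx, hM x hx⟩
  exact ((hud.mul ((phiN_cont n).comp hud)).sub
    ((PhiNBig_cont n).comp hud)).continuousOn.add (ha.continuous.continuousOn.mul h1)

lemma energy_nonneg (ha : ContDiff ℝ 1 a) (hf : ContDiffOn ℝ 1 f (Ici 0)) (hu0 : 0 < u0)
    (hfeq : Feq f u0) (hfsgn : Fsgn f u0)
    (hapos : ∀ x ∈ Icc (0:ℝ) 1, 0 < a x)
    (hu2 : ContDiff ℝ 2 u) (hupos : ∀ x ∈ Ioo (0:ℝ) 1, 0 < u x)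
    {x : ℝ} (hx : x ∈ Icc (0:ℝ) 1) : 0 ≤ EnergyN a f u0 n u x := by
  have h1 : 0 ≤ deriv u x * phiN n (deriv u x) - PhiNBig n (deriv u x) :=
    sub_nonneg.mpr (G_nonneg n (deriv u x))
  have h2 : 0 ≤ a x * Fprim f u0 (u x) :=
    mul_nonneg (hapos x hx).le (F_nonneg hf hu0 hfeq hfsgn (u_nonneg hu2 hupos x hx))
  unfold EnergyN
  linarith

end main


theorem statement16 (a f : ℝ → ℝ) (u0 : ℝ)
    (ha : ContDiff ℝ 1 a) (hapos : ∀ x ∈ Icc (0:ℝ) 1, 0 < a x)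
    (hf : ContDiffOn ℝ 1 f (Ici 0)) (hu0 : 0 < u0)
    (hfeq : Feq f u0) (hfsgn : Fsgn f u0)
    (us : ℕ → ℝ → ℝ) (hsol : ∀ n, IsPnSol a f n (us n))
    (M : ℝ) (hM : ∀ n, ∀ x ∈ Icc (0:ℝ) 1, |us n x| ≤ M) :
    (∃ K : ℝ, ∀ n, ∀ x ∈ Icc (0:ℝ) 1, |EnergyN a f u0 n (us n) x| ≤ K) ∧
    (∀ n, ∀ x ∈ Ioo (0:ℝ) 1,
      |deriv (EnergyN a f u0 n (us n)) x| ≤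
        (sSup ((fun y => |deriv a y|) '' Icc (0:ℝ) 1) / sInf (a '' Icc (0:ℝ) 1)) *
          EnergyN a f u0 n (us n) x) ∧
    ∃ ψ : ℕ → ℕ, StrictMono ψ ∧ ∃ E : ℝ → ℝ, ContinuousOn E (Icc 0 1) ∧
      TendstoUniformlyOn (fun j x => EnergyN a f u0 (ψ j) (us (ψ j)) x) E atTop (Icc 0 1) := by
  have h01 : (0:ℝ) ∈ Icc (0:ℝ) 1 := by norm_num
  set S := sSup ((fun y => |deriv a y|) '' Icc (0:ℝ) 1) with hS_def
  set I := sInf (a '' Icc (0:ℝ) 1) with hI_def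
  have hdacont : Continuous (deriv a) := ha.continuous_deriv le_rfl
  have hSb : ∀ x ∈ Icc (0:ℝ) 1, |deriv a x| ≤ S := fun x hx =>
    le_csSup ((isCompact_Icc.image hdacont.abs).bddAbove) ⟨x, hx, rfl⟩
  have hIle : ∀ x ∈ Icc (0:ℝ) 1, I ≤ a x := fun x hx =>
    csInf_le ((isCompact_Icc.image ha.continuous).bddBelow) ⟨x, hx, rfl⟩
  have hIpos : 0 < I := by
    obtain ⟨z, hz, hzmin⟩ := isCompact_Icc.exists_isMinOn ⟨0, h01⟩
      ha.continuous.continuousOn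
    have hle : a z ≤ I := by
      refine le_csInf ⟨a 0, 0, h01, rfl⟩ ?_
      rintro b ⟨w, hw, rfl⟩
      exact hzmin hw
    exact lt_of_lt_of_le (hapos z hz) hle
  have hSnn : 0 ≤ S := (abs_nonneg _).trans (hSb 0 h01)
  have hC0 : 0 ≤ S / I := div_nonneg hSnn hIpos.le
  -- the key pointwise bound
  have hkey : ∀ n, ∀ x ∈ Icc (0:ℝ) 1,
      |deriv a x * Fprim f u0 (us n x)| ≤ (S / I) * EnergyN a f u0 n (us n) x := by
    intro n x hx
    obtain ⟨hu2, hupos, _, _, _⟩ := hsol n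
    have hF : 0 ≤ Fprim f u0 (us n x) :=
      F_nonneg hf hu0 hfeq hfsgn (u_nonneg hu2 hupos x hx)
    have hE1 : a x * Fprim f u0 (us n x) ≤ EnergyN a f u0 n (us n) x := by
      have := G_nonneg n (deriv (us n) x); unfold EnergyN; linarith
    rw [abs_mul, abs_of_nonneg hF]
    calc |deriv a x| * Fprim f u0 (us n x) ≤ S * Fprim f u0 (us n x) :=
          mul_le_mul_of_nonneg_right (hSb x hx) hF
      _ = (S / I) * (I * Fprim f u0 (us n x)) := by field_simp
      _ ≤ (S / I) * (a x * Fprim f u0 (us n x)) :=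
          mul_le_mul_of_nonneg_left (mul_le_mul_of_nonneg_right (hIle x hx) hF) hC0
      _ ≤ (S / I) * EnergyN a f u0 n (us n) x := mul_le_mul_of_nonneg_left hE1 hC0
  -- continuity of energies
  set R := max M u0 with hR_def
  have hRu0 : u0 ≤ R := le_max_right _ _
  have hMx : ∀ n, ∀ x ∈ Icc (0:ℝ) 1, us n x ≤ R := fun n x hx =>
    ((le_abs_self _).trans (hM n x hx)).trans (le_max_left _ _)
  have hEc : ∀ n, ContinuousOn (EnergyN a f u0 n (us n)) (Icc 0 1) := by
    intro n
    obtain ⟨hu2, hupos, _, _, _⟩ := hsol n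
    exact energy_contOn ha hf hu0 hu2 hupos hRu0 (hMx n)
  have hEnn : ∀ n, ∀ x ∈ Icc (0:ℝ) 1, 0 ≤ EnergyN a f u0 n (us n) x := by
    intro n
    obtain ⟨hu2, hupos, _, _, _⟩ := hsol n
    exact fun x hx => energy_nonneg ha hf hu0 hfeq hfsgn hapos hu2 hupos hx
  have hEd : ∀ n, ∀ x ∈ Ioo (0:ℝ) 1, HasDerivAt (EnergyN a f u0 n (us n))
      (deriv a x * Fprim f u0 (us n x)) x := by
    intro n x hx
    obtain ⟨hu2, hupos, _, _, hode⟩ := hsol n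
    exact energy_hasDerivAt ha hf hu0 hu2 hupos hode hx
  -- uniform bound
  set A := sSup (a '' Icc (0:ℝ) 1) with hA_def
  set B := sSup (Fprim f u0 '' Icc (0:ℝ) R) with hB_def
  have hA : ∀ x ∈ Icc (0:ℝ) 1, a x ≤ A := fun x hx =>
    le_csSup ((isCompact_Icc.image ha.continuous).bddAbove) ⟨x, hx, rfl⟩
  have hA0 : 0 ≤ A := (hapos 0 h01).le.trans (hA 0 h01)
  have hB : ∀ s ∈ Icc (0:ℝ) R, Fprim f u0 s ≤ B := fun s hs =>
    le_csSup (IsCompact.bddAbove_image isCompact_Icc (F_continuousOn hf hu0 hRu0)) ⟨s, hs, rfl⟩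
  have hB0 : 0 ≤ B := by
    have := hB u0 ⟨hu0.le, hRu0⟩
    rwa [F_u0] at this
  set K := A * B * Real.exp (S / I) with hK_def
  have hKbound : ∀ n, ∀ x ∈ Icc (0:ℝ) 1, |EnergyN a f u0 n (us n) x| ≤ K := by
    intro n x hx
    obtain ⟨hu2, hupos, hd0, _, hode⟩ := hsol n
    set E := EnergyN a f u0 n (us n) with hE_def
    have hE0 : E 0 = a 0 * Fprim f u0 (us n 0) := by
      simp [hE_def, EnergyN, hd0, phiN_zero, PhiNBig_zero]
    have hE0le : E 0 ≤ A * B := by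
      rw [hE0]
      exact mul_le_mul (hA 0 h01) (hB (us n 0) ⟨u_nonneg hu2 hupos 0 h01, hMx n 0 h01⟩)
        (F_nonneg hf hu0 hfeq hfsgn (u_nonneg hu2 hupos 0 h01)) hA0
    have hmain : E x ≤ E 0 * Real.exp (S / I) := by
      rcases eq_or_lt_of_le hx.1 with h0 | h0
      · rw [← h0]
        nlinarith [Real.one_le_exp hC0, hEnn n 0 h01]
      · have hstep : ∀ x0 ∈ Ioc (0:ℝ) x, E x ≤ E x0 * Real.exp (S / I) := by
          intro x0 hx0
          have hsub : Icc x0 x ⊆ Icc (0:ℝ) 1 := Icc_subset_Icc hx0.1.le hx.2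
          have hGron := norm_le_gronwallBound_of_norm_deriv_right_le
            (f := E) (f' := fun y => deriv a y * Fprim f u0 (us n y))
            (δ := E x0) (K := S / I) (ε := 0) (a := x0) (b := x)
            (hEc n |>.mono hsub)
            (fun y hy => ((hEd n y ⟨lt_of_lt_of_le hx0.1 hy.1,
              lt_of_lt_of_le hy.2 hx.2⟩)).hasDerivWithinAt)
            (by rw [Real.norm_eq_abs, abs_of_nonneg (hEnn n x0 (hsub ⟨le_rfl, hx0.2⟩))])
            (fun y hy => by
              have hyI : y ∈ Icc (0:ℝ) 1 := hsub ⟨hy.1, hy.2.le⟩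
              rw [Real.norm_eq_abs, Real.norm_eq_abs, abs_of_nonneg (hEnn n y hyI), add_zero]
              exact hkey n y hyI)
            x (right_mem_Icc.mpr hx0.2)
          rw [gronwallBound_ε0, Real.norm_eq_abs, abs_of_nonneg (hEnn n x hx)] at hGron
          refine hGron.trans ?_
          apply mul_le_mul_of_nonneg_left _ (hEnn n x0 (hsub ⟨le_rfl, hx0.2⟩))
          apply Real.exp_le_exp.mpr
          have hx1 : x - x0 ≤ 1 := by
            have := hx.2; have := hx0.1; linarith
          nlinarith
        have hne : (𝓝[Ioc (0:ℝ) x] (0:ℝ)).NeBot := by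
          apply mem_closure_iff_nhdsWithin_neBot.mp
          rw [closure_Ioc (ne_of_lt h0)]
          exact ⟨le_rfl, h0.le⟩
        have htd : Tendsto (fun x0 => E x0 * Real.exp (S / I)) (𝓝[Ioc (0:ℝ) x] 0)
            (𝓝 (E 0 * Real.exp (S / I))) := by
          apply Tendsto.mul_const
          exact ((hEc n) 0 h01).tendsto.mono_left
            (nhdsWithin_mono 0 (fun t ht => ⟨ht.1.le, ht.2.trans hx.2⟩))
        exact ge_of_tendsto htd (eventually_mem_nhdsWithin.mono fun x0 hx0 => hstep x0 hx0)
    rw [abs_of_nonneg (hEnn n x hx)]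
    refine hmain.trans ?_
    rw [hK_def]
    exact mul_le_mul_of_nonneg_right hE0le (Real.exp_pos _).le
  refine ⟨⟨K, hKbound⟩, ?_, ?_⟩
  · -- derivative bound
    intro n x hx
    rw [(hEd n x hx).deriv]
    exact hkey n x (Ioo_subset_Icc_self hx)
  -- subsequence
  have hK0 : 0 ≤ K := (abs_nonneg _).trans (hKbound 0 0 h01)
  set L0 := (S / I) * K with hL0_def
  have hL0nn : 0 ≤ L0 := mul_nonneg hC0 hK0
  set L : NNReal := Real.toNNReal L0 with hL_def
  have hLcoe : (L : ℝ) = L0 := Real.coe_toNNReal _ hL0nn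
  have hlip : ∀ n, LipschitzOnWith L (EnergyN a f u0 n (us n)) (Icc 0 1) := by
    intro n
    apply lipschitzOnWith_Icc_of_Ioo (hEc n)
    apply Convex.lipschitzOnWith_of_nnnorm_deriv_le
      (fun x hx => (hEd n x hx).differentiableAt) _ (convex_Ioo 0 1)
    intro x hx
    rw [← NNReal.coe_le_coe, coe_nnnorm, hLcoe, Real.norm_eq_abs, (hEd n x hx).deriv]
    refine (hkey n x (Ioo_subset_Icc_self hx)).trans ?_
    apply mul_le_mul_of_nonneg_left _ hC0
    exact (le_abs_self _).trans (hKbound n x (Ioo_subset_Icc_self hx))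
  haveI : CompactSpace (Icc (0:ℝ) 1) := isCompact_iff_compactSpace.mp isCompact_Icc
  set g : ℕ → BoundedContinuousFunction (Icc (0:ℝ) 1) ℝ := fun n =>
    BoundedContinuousFunction.mkOfCompact
      ⟨(Icc (0:ℝ) 1).restrict (EnergyN a f u0 n (us n)),
       continuousOn_iff_continuous_restrict.mp (hEc n)⟩ with hg_def
  have hgval : ∀ n (x : Icc (0:ℝ) 1), g n x = EnergyN a f u0 n (us n) x := fun n x => rfl
  have in_s : ∀ (h : BoundedContinuousFunction (Icc (0:ℝ) 1) ℝ) (x : Icc (0:ℝ) 1),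
      h ∈ Set.range g → h x ∈ Icc (-K) K := by
    rintro h x ⟨m, rfl⟩
    rw [hgval]
    have := hKbound m x x.2
    constructor <;> [linarith [neg_abs_le (EnergyN a f u0 m (us m) ↑x)];
      linarith [le_abs_self (EnergyN a f u0 m (us m) ↑x)]]
  have equi : Equicontinuous ((↑) : Set.range g → (Icc (0:ℝ) 1) → ℝ) := by
    apply Metric.equicontinuous_of_continuity_modulus (fun d => L0 * d)
    · have : Tendsto (fun d : ℝ => L0 * d) (𝓝 0) (𝓝 (L0 * 0)) :=
        (continuous_const.mul continuous_id).tendsto 0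
      simpa using this
    · rintro x y ⟨h, m, rfl⟩
      show dist (g m x) (g m y) ≤ L0 * dist x y
      rw [hgval, hgval, Subtype.dist_eq]
      have := lipschitzOnWith_iff_dist_le_mul.mp (hlip m) x.1 x.2 y.1 y.2
      rwa [hLcoe] at this
  have hcomp : IsCompact (closure (Set.range g)) :=
    BoundedContinuousFunction.arzela_ascoli (Icc (-K) K) isCompact_Icc (Set.range g) in_s equi
  obtain ⟨G, hG, ψ, hψ, hconv⟩ :=
    hcomp.tendsto_subseq (fun n => subset_closure (Set.mem_range_self n))
  refine ⟨ψ, hψ, fun x => if h : x ∈ Icc (0:ℝ) 1 then G ⟨x, h⟩ else 0, ?_, ?_⟩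
  · rw [continuousOn_iff_continuous_restrict]
    have : (Icc (0:ℝ) 1).domRestrict (fun x => if h : x ∈ Icc (0:ℝ) 1 then G ⟨x, h⟩ else 0)
        = ⇑G := by
      funext z
      simp only [Set.domRestrict_apply, dif_pos z.2]
    rw [this]
    exact G.continuous
  · rw [tendstoUniformlyOn_iff_tendstoUniformly_comp_coe]
    have h2 := BoundedContinuousFunction.tendsto_iff_tendstoUniformly.mp hconv
    have e1 : (fun j (x : Icc (0:ℝ) 1) => EnergyN a f u0 (ψ j) (us (ψ j)) ↑x)
        = fun j => ⇑((g ∘ ψ) j) := rfl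
    have e2 : ((fun x => if h : x ∈ Icc (0:ℝ) 1 then G ⟨x, h⟩ else 0) ∘
        ((↑) : Icc (0:ℝ) 1 → ℝ)) = ⇑G := by
      funext z
      simp only [Function.comp_apply, dif_pos z.2]
    rw [e1, e2]
    exact h2
end auxlemmas
end
end

section
/- Let a ∈ C¹([0,1]) with a > 0, and f ∈ C¹([0,∞)) satisfy (f_eq) and (f_sgn). For each n ∈ ℕ let u_n be a classical solution of (P_n), and assume sup_n ‖u_n‖_{L∞(0,1)} < ∞ and that v_n := φ_n(u_n') → v uniformly on [0,1]. Let [α,β] ⊆ [0,1] with α < β be such that |v(x)| ≤ 1 − ε on [α,β] for some ε > 0, and suppose u_n → u uniformly on [α,β]. Then a subsequence of (u_n) converges to u in C¹([α,β]); in particular, u ∈ C¹([α,β]) and u' = φ^{−1}(v) on [α,β]. -/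
open Set MeasureTheory Filter Topology

noncomputable section

/-! Since `|v| ≤ 1 - ε` and `φ(n) → 1`, eventually `|φₙ(uₙ')| < φ(n)` on `[α,β]`, where
`φₙ` agrees with `φ`; there `uₙ' = φ⁻¹(φₙ(uₙ'))`, which converges uniformly to `φ⁻¹(v)`
because `φ⁻¹` is uniformly continuous on `[-1 + ε/2, 1 - ε/2]`. So the whole sequence
converges in `C¹([α,β])`, and `φ⁻¹(v)` is the derivative of `u`, as `uₙ(x) - uₙ(α) = ∫_α^x uₙ'`
passes to the limit. -/

theorem phiInv_phi (s : ℝ) : phiInv (phi s) = s := by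
  have hpos : (0 : ℝ) < 1 + s ^ 2 := by positivity
  have hsq : Real.sqrt (1 + s ^ 2) ^ 2 = 1 + s ^ 2 := Real.sq_sqrt hpos.le
  have hden : Real.sqrt (1 - phi s ^ 2) = 1 / Real.sqrt (1 + s ^ 2) := by
    rw [phi, div_pow, hsq, show 1 - s ^ 2 / (1 + s ^ 2) = 1 / (1 + s ^ 2) by field_simp; ring,
      one_div, one_div, Real.sqrt_inv]
  rw [phiInv, hden, phi]
  have := Real.sqrt_pos.2 hpos
  field_simp

theorem one_sub_inv_succ_le_phi (n : ℕ) : 1 - 1 / ((n : ℝ) + 1) ≤ phi n := by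
  have hn : (0 : ℝ) ≤ n := n.cast_nonneg
  have hsqrt : Real.sqrt (1 + (n : ℝ) ^ 2) ≤ n + 1 :=
    (Real.sqrt_le_left (by positivity)).2 (by nlinarith)
  calc 1 - 1 / ((n : ℝ) + 1) = n / (n + 1) := by field_simp; ring
    _ ≤ n / Real.sqrt (1 + (n : ℝ) ^ 2) :=
      div_le_div_of_nonneg_left hn (Real.sqrt_pos.2 (by positivity)) hsqrt
    _ = phi n := rfl

theorem phiN_eq_phi_of_abs_lt {n : ℕ} {s : ℝ} (h : |phiN n s| < phi n) : phiN n s = phi s := by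
  have hD : 0 < phiD n := by unfold phiD; positivity
  unfold phiN at h ⊢
  split_ifs at h ⊢ with hs hs'
  · nlinarith [le_abs_self (phi n + phiD n * (s - n))]
  · nlinarith [neg_abs_le (-phi n + phiD n * (s + n))]
  · rfl

theorem uniformContinuousOn_phiInv {c : ℝ} (hc : c < 1) :
    UniformContinuousOn phiInv (Icc (-c) c) := by
  refine isCompact_Icc.uniformContinuousOn_of_continuous
    (continuousOn_id.div (by fun_prop) fun y hy => ?_)
  have : y ^ 2 < 1 := by nlinarith [hy.1, hy.2]
  exact (Real.sqrt_pos.2 (by linarith)).ne'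

theorem tendstoUniformlyOn_phiInv_of_tendstoUniformlyOn_phiN {w : ℕ → ℝ → ℝ} {v : ℝ → ℝ}
    {s : Set ℝ} {ε : ℝ} (hε : 0 < ε) (hv : ∀ x ∈ s, |v x| ≤ 1 - ε)
    (hw : TendstoUniformlyOn (fun n x => phiN n (w n x)) v atTop s) :
    TendstoUniformlyOn w (fun x => phiInv (v x)) atTop s := by
  set c := 1 - ε / 2 with hc
  have hbound : ∀ᶠ n in atTop, ∀ x ∈ s, |phiN n (w n x)| ≤ c := by
    filter_upwards [Metric.tendstoUniformlyOn_iff.1 hw (ε / 2) (half_pos hε)] with n hn x hx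
    have hdist := hn x hx
    rw [Real.dist_eq, abs_sub_comm] at hdist
    linarith [hv x hx, abs_sub_abs_le_abs_sub (phiN n (w n x)) (v x)]
  have hphi : ∀ᶠ n : ℕ in atTop, c < phi n := by
    filter_upwards [tendsto_one_div_add_atTop_nhds_zero_nat.eventually_lt_const (half_pos hε)]
      with n hn
    linarith [one_sub_inv_succ_le_phi n]
  have hmem : ∀ᶠ n in atTop, ∀ x ∈ s, phiN n (w n x) ∈ Icc (-c) c :=
    hbound.mono fun n hn x hx => abs_le.1 (hn x hx)
  have hvmem : ∀ x ∈ s, v x ∈ Icc (-c) c :=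
    fun x hx => abs_le.1 ((hv x hx).trans (by linarith))
  have hc1 : c < 1 := by linarith
  have hcomp := (uniformContinuousOn_phiInv hc1).comp_tendstoUniformlyOn_eventually hmem hvmem hw
  refine hcomp.congr ?_
  filter_upwards [hbound, hphi] with n hn hn' x hx
  simp only [phiN_eq_phi_of_abs_lt ((hn x hx).trans_lt hn'), phiInv_phi]

theorem hasDerivWithinAt_Icc_of_tendstoUniformlyOn_deriv {ι : Type*} {l : Filter ι} [l.NeBot]
    [l.IsCountablyGenerated] {f : ι → ℝ → ℝ} {u g : ℝ → ℝ} {a b : ℝ}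
    (hf : ∀ i, ContDiff ℝ 1 (f i))
    (hu : ∀ x ∈ Icc a b, Tendsto (fun i => f i x) l (𝓝 (u x)))
    (hg : TendstoUniformlyOn (fun i => deriv (f i)) g l (Icc a b)) {x : ℝ} (hx : x ∈ Icc a b) :
    HasDerivWithinAt u (g x) (Icc a b) x := by
  have hf' : ∀ i, Continuous (deriv (f i)) := fun i => (hf i).continuous_deriv le_rfl
  have hgc : ContinuousOn g (Icc a b) :=
    hg.continuousOn (Frequently.of_forall fun i => (hf' i).continuousOn)
  have hsub : ∀ {y}, y ∈ Icc a b → uIcc a y ⊆ Icc a b := fun hy => by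
    rw [uIcc_of_le hy.1]; exact Icc_subset_Icc_right hy.2
  have hint : ∀ y ∈ Icc a b, u y = u a + ∫ t in a..y, g t := by
    intro y hy
    have hlim : Tendsto (fun i => f i y - f i a) l (𝓝 (∫ t in a..y, g t)) := by
      simp_rw [← intervalIntegral.integral_deriv_eq_sub
        (fun t _ => ((hf _).differentiable one_ne_zero).differentiableAt)
        ((hf' _).intervalIntegrable _ _)]
      exact (hg.mono (hsub hy)).tendsto_intervalIntegral_of_continuousOn
        (Eventually.of_forall fun i => (hf' i).continuousOn)
    have := tendsto_nhds_unique ((hu y hy).sub (hu a ⟨le_rfl, hy.1.trans hy.2⟩)) hlim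
    linarith
  have : Fact (x ∈ Icc a b) := ⟨hx⟩
  have hFTC : HasDerivWithinAt (fun y => ∫ t in a..y, g t) (g x) (Icc a b) x :=
    intervalIntegral.integral_hasDerivWithinAt_right ((hgc.mono (hsub hx)).intervalIntegrable)
      (hgc.stronglyMeasurableAtFilter_nhdsWithin measurableSet_Icc x) (hgc x hx)
  exact (hFTC.const_add (u a)).congr hint (hint x hx)

theorem statement18_general (a f : ℝ → ℝ)
    (us : ℕ → ℝ → ℝ) (hsol : ∀ n, IsPnSol a f n (us n))
    (u v : ℝ → ℝ)
    (hvconv : TendstoUniformlyOn (fun n x => phiN n (deriv (us n) x)) v atTop (Icc 0 1))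
    (α β : ℝ) (hsub : Icc α β ⊆ Icc (0:ℝ) 1)
    (ε : ℝ) (hε : 0 < ε) (hv : ∀ x ∈ Icc α β, |v x| ≤ 1 - ε)
    (huconv : TendstoUniformlyOn (fun n => us n) u atTop (Icc α β)) :
    ∃ ψ : ℕ → ℕ, StrictMono ψ ∧
      TendstoUniformlyOn (fun j x => deriv (us (ψ j)) x)
        (fun x => phiInv (v x)) atTop (Icc α β) ∧
      ContinuousOn (fun x => phiInv (v x)) (Icc α β) ∧
      ∀ x ∈ Icc α β, HasDerivWithinAt u (phiInv (v x)) (Icc α β) x := by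
  have hC1 : ∀ n, ContDiff ℝ 1 (us n) := fun n => (hsol n).1.of_le one_le_two
  have hderiv : TendstoUniformlyOn (fun n => deriv (us n)) (fun x => phiInv (v x)) atTop
      (Icc α β) :=
    tendstoUniformlyOn_phiInv_of_tendstoUniformlyOn_phiN hε hv (hvconv.mono hsub)
  refine ⟨id, strictMono_id, hderiv, ?_, fun x hx => ?_⟩
  · exact hderiv.continuousOn (Frequently.of_forall fun n =>
      ((hC1 n).continuous_deriv le_rfl).continuousOn)
  · exact hasDerivWithinAt_Icc_of_tendstoUniformlyOn_deriv hC1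
      (fun y hy => huconv.tendsto_at hy) hderiv hx

theorem statement18 (a f : ℝ → ℝ) (u0 : ℝ)
    (ha : ContDiff ℝ 1 a) (hapos : ∀ x ∈ Icc (0:ℝ) 1, 0 < a x)
    (hf : ContDiffOn ℝ 1 f (Ici 0)) (hu0 : 0 < u0)
    (hfeq : Feq f u0) (hfsgn : Fsgn f u0)
    (us : ℕ → ℝ → ℝ) (hsol : ∀ n, IsPnSol a f n (us n))
    (M : ℝ) (hM : ∀ n, ∀ x ∈ Icc (0:ℝ) 1, |us n x| ≤ M)
    (u v : ℝ → ℝ)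
    (hvconv : TendstoUniformlyOn (fun n x => phiN n (deriv (us n) x)) v atTop (Icc 0 1))
    (α β : ℝ) (hαβ : α < β) (hsub : Icc α β ⊆ Icc (0:ℝ) 1)
    (ε : ℝ) (hε : 0 < ε) (hv : ∀ x ∈ Icc α β, |v x| ≤ 1 - ε)
    (huconv : TendstoUniformlyOn (fun n => us n) u atTop (Icc α β)) :
    ∃ ψ : ℕ → ℕ, StrictMono ψ ∧
      TendstoUniformlyOn (fun j x => deriv (us (ψ j)) x)
        (fun x => phiInv (v x)) atTop (Icc α β) ∧
      ContinuousOn (fun x => phiInv (v x)) (Icc α β) ∧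
      ∀ x ∈ Icc α β, HasDerivWithinAt u (phiInv (v x)) (Icc α β) x :=
  statement18_general a f us hsol u v hvconv α β hsub ε hε hv huconv
end
end
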